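/- For all s, t ∈ μ_r, v ∈ A_1, and w ∈ A_r: (yv) ⋄_s (z_t^δ w) = (y ⋄_s 1)(v ⋄_s z_t^δ w) + z_t^δ(yv ⋄_t w). -/

import Mathlib

open FreeAlgebra

/-- Alphabet of `A_1 = ℚ⟨x,y⟩`. -/
inductive LetA : Type | x : LetA | y : LetA

/-- Alphabet of `A_r = ℚ⟨x, y_s : s ∈ μ_r⟩`; the group `G` plays the role of `μ_r`. -/
inductive LetR (G : Type) : Type | x : LetR G | y : G → LetR G

/-- `A_1 = ℚ⟨x, y⟩`. -/
abbrev A1 : Type := FreeAlgebra ℚ LetA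

/-- `A_r = ℚ⟨x, y_s : s ∈ μ_r⟩`. -/
abbrev Ar (G : Type) : Type := FreeAlgebra ℚ (LetR G)

noncomputable def X1 : A1 := ι ℚ LetA.x
noncomputable def Y1 : A1 := ι ℚ LetA.y

variable {G : Type} [CommGroup G]

noncomputable def Xr : Ar G := ι ℚ LetR.x
noncomputable def Yr (s : G) : Ar G := ι ℚ (LetR.y s)

/-- `z = x + y_1`. -/
noncomputable def zet : Ar G := Xr + Yr 1

open scoped Classical in
/-- `z_s^δ = x + δ(s) y_s` with `δ(1) = 0`, `δ(s) = 1` otherwise. -/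
noncomputable def zdel (s : G) : Ar G := if s = 1 then Xr else Xr + Yr s

/-- The involutive automorphism `φ` of `A_r`: `φ(x) = z`, `φ(y_s) = z_s^δ - z`. -/
noncomputable def phi : Ar G →ₐ[ℚ] Ar G :=
  lift ℚ (fun l => match l with
    | LetR.x => zet
    | LetR.y s => zdel s - zet)

/-- The natural embedding `A_1 → A_r`, `x ↦ x`, `y ↦ y_1`. -/
noncomputable def jm : A1 →ₐ[ℚ] Ar G :=
  lift ℚ (fun l => match l with
    | LetA.x => Xr
    | LetA.y => Yr 1)

open scoped Classical in
/-- The anti-automorphism `τ` of `A_r`: `τ(x) = y_1`, `τ(y_1) = x`, `τ(y_s) = -y_s` (`s ≠ 1`). -/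
noncomputable def tauR : Ar G →ₗ[ℚ] Ar G :=
  (MulOpposite.opLinearEquiv ℚ).symm.toLinearMap ∘ₗ
    (lift ℚ (fun l => match l with
      | LetR.x => MulOpposite.op (Yr 1)
      | LetR.y s => MulOpposite.op (if s = 1 then Xr else -(Yr s)) ) :
        Ar G →ₐ[ℚ] (Ar G)ᵐᵒᵖ).toLinearMap

/-- The anti-automorphism `τ` of `A_1`: `τ(x) = y`, `τ(y) = x`. -/
noncomputable def tau1 : A1 →ₗ[ℚ] A1 :=
  (MulOpposite.opLinearEquiv ℚ).symm.toLinearMap ∘ₗ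
    (lift ℚ (fun l => match l with
      | LetA.x => MulOpposite.op Y1
      | LetA.y => MulOpposite.op X1) : A1 →ₐ[ℚ] A1ᵐᵒᵖ).toLinearMap

/-- `wordP [(a₁,s₁),...,(a_l,s_l)] = x^{a₁} y_{s₁} ⋯ x^{a_l} y_{s_l}`,
i.e. the word `z_{a₁+1, s₁} ⋯ z_{a_l+1, s_l}`. -/
noncomputable def wordP (L : List (ℕ × G)) : Ar G :=
  (L.map (fun p => Xr ^ p.1 * Yr p.2)).prod

/-- Cumulative-product reindexing of subscripts: this realizes the composition `I ∘ M_s`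
on subscript lists, sending `(s₁, s₂, …, s_l)` to `(s s₁, s s₁ s₂, …, s s₁ ⋯ s_l)`. -/
def cumul : G → List (ℕ × G) → List (ℕ × G)
  | _, [] => []
  | g, p :: L => (p.1, g * p.2) :: cumul (g * p.2) L

/-- All the data entering the definition of the diamond products `⋄_s`:
the harmonic product `*`, the maps `ψ_s = φ ∘ I ∘ M_s`, and the family of
`ℚ`-bilinear diamond products `D s : A_1 × A_r → A_r` (together with the
corestriction `D1` of `⋄_1` to `A_1 × A_1 → A_1`), each characterized by its
defining recursive rules. -/
structure DiamondSetup (G : Type) [CommGroup G] where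
  /-- the harmonic product -/
  hst : Ar G →ₗ[ℚ] Ar G →ₗ[ℚ] Ar G
  one_hst : ∀ w, hst 1 w = w
  hst_one : ∀ v, hst v 1 = v
  hst_xr : ∀ v w, hst (v * Xr) w = hst v w * Xr
  hst_xl : ∀ v w, hst v (w * Xr) = hst v w * Xr
  hst_yy : ∀ (v w : Ar G) (s t : G), hst (v * Yr s) (w * Yr t) =
      hst v (w * Yr t) * Yr s + hst (v * Yr s) w * Yr t + hst v w * (Xr * Yr (s * t))
  /-- the linear automorphisms `ψ_s = φ ∘ I ∘ M_s` -/
  psi : G → (Ar G ≃ₗ[ℚ] Ar G)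
  psi_spec : ∀ (s : G) (L : List (ℕ × G)) (a : ℕ),
      psi s (wordP L * Xr ^ a) = phi (wordP (cumul s L) * Xr ^ a)
  /-- the diamond products `⋄_s : A_1 × A_r → A_r` -/
  D : G → A1 →ₗ[ℚ] Ar G →ₗ[ℚ] Ar G
  one_D : ∀ (s : G) (w : Ar G), D s 1 w = w
  D_one : ∀ (s : G) (v : A1), D s v 1 = psi s (phi (jm v))
  Dxx : ∀ (s : G) (v : A1) (w : Ar G), D s (v * X1) (w * Xr) =
      D s v (w * Xr) * Xr - D s (v * Y1) w * Xr
  Dyx : ∀ (s : G) (v : A1) (w : Ar G), D s (v * Y1) (w * Xr) =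
      D s v (w * Xr) * Yr 1 + D s (v * Y1) w * Xr
  Dxy : ∀ (s : G) (v : A1) (w : Ar G), D s (v * X1) (w * Yr 1) =
      D s v (w * Yr 1) * Xr + D s (v * X1) w * Yr 1
  Dyy : ∀ (s : G) (v : A1) (w : Ar G), D s (v * Y1) (w * Yr 1) =
      D s v (w * Yr 1) * Yr 1 - D s (v * X1) w * Yr 1
  Dxyt : ∀ (s t : G), t ≠ 1 → ∀ (v : A1) (w : Ar G), D s (v * X1) (w * Yr t) =
      D s v (w * Yr t) * Xr + D s v (w * (Xr + Yr t)) * Yr t - D s (v * Y1) w * Yr t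
  Dyyt : ∀ (s t : G), t ≠ 1 → ∀ (v : A1) (w : Ar G), D s (v * Y1) (w * Yr t) =
      D s v (w * Yr t) * Yr 1 - D s v (w * (Xr + Yr t)) * Yr t + D s (v * Y1) w * Yr t
  /-- `⋄_1` as a product `A_1 × A_1 → A_1` -/
  D1 : A1 →ₗ[ℚ] A1 →ₗ[ℚ] A1
  D1_spec : ∀ u v : A1, jm (D1 u v) = D 1 u (jm v)

/-!
Both sides are bilinear in `(v, w)`, and `A_1`, `A_r` are spanned by `1` and right multiples of
letters. For `w = w' b` the defining recursion for right multiplication, which is the same for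
every index, rewrites the three diamond products of the identity through products with shorter
arguments, so the identity propagates (for `v = 1` with the help of
`(v x) ⋄_s w + (v y) ⋄_s w = (v ⋄_s w) z`). This step never looks at the left factor `z_t^δ`,
and everything reduces to `w = 1`. There the key fact is that `v ↦ v ⋄_s 1 = ψ_s φ(v)` is the
algebra homomorphism `x ↦ z_s^δ`, `y ↦ z - z_s^δ`, because `ψ_s(x u) = z ψ_s(u)` and
`ψ_s(y_1 u) = φ(y_s) ψ_s(u)`.
-/

theorem FreeAlgebra.induction_mul_ι {R X : Type*} [CommSemiring R]
    {motive : FreeAlgebra R X → Prop} (one : motive 1)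
    (mul_ι : ∀ w x, motive w → motive (w * ι R x))
    (add : ∀ v w, motive v → motive w → motive (v + w))
    (smul : ∀ (r : R) w, motive w → motive (r • w)) (w : FreeAlgebra R X) : motive w := by
  suffices h : ∀ u, motive u → motive (u * w) by simpa using h 1 one
  induction w using FreeAlgebra.induction with
  | grade0 r => intro u hu; simpa [Algebra.algebraMap_eq_smul_one] using smul r u hu
  | grade1 x => exact fun u => mul_ι u x
  | mul a b ha hb => intro u hu; simpa [mul_assoc] using hb _ (ha u hu)
  | add a b ha hb => intro u hu; simpa [mul_add] using add _ _ (ha u hu) (hb u hu)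

lemma ι_LetA_x : (ι ℚ LetA.x : A1) = X1 := rfl

lemma ι_LetA_y : (ι ℚ LetA.y : A1) = Y1 := rfl

lemma ι_LetR_x {G : Type} : (ι ℚ LetR.x : Ar G) = Xr := rfl

lemma ι_LetR_y {G : Type} (u : G) : (ι ℚ (LetR.y u) : Ar G) = Yr u := rfl

lemma zdel_one : zdel (1 : G) = Xr := by simp [zdel]

lemma zdel_of_ne_one {t : G} (ht : t ≠ 1) : zdel t = Xr + Yr t := by simp [zdel, ht]

@[simp] lemma phi_Xr : phi (G := G) Xr = zet := by simp [phi, Xr]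

@[simp] lemma phi_Yr (u : G) : phi (Yr u) = zdel u - zet := by simp [phi, Yr]

@[simp] lemma jm_X1 : jm (G := G) X1 = Xr := by simp [jm, X1]

@[simp] lemma jm_Y1 : jm (G := G) Y1 = Yr 1 := by simp [jm, Y1]

lemma wordP_cons {G : Type} (p : ℕ × G) (L : List (ℕ × G)) :
    wordP (p :: L) = Xr ^ p.1 * Yr p.2 * wordP L := by
  simp [wordP]

lemma span_wordP_mul_pow_eq_top {G : Type} :
    Submodule.span ℚ (Set.range fun p : List (ℕ × G) × ℕ => wordP p.1 * Xr ^ p.2) = ⊤ := by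
  refine Submodule.eq_top_iff'.2 fun u => ?_
  induction u using FreeAlgebra.induction_mul_ι with
  | one => exact Submodule.subset_span ⟨([], 0), by simp [wordP]⟩
  | mul_ι w l hw =>
    induction hw using Submodule.span_induction with
    | mem _ hu =>
      obtain ⟨⟨L, a⟩, rfl⟩ := hu
      refine Submodule.subset_span ?_
      cases l with
      | x => exact ⟨(L, a + 1), by simp [ι_LetR_x, pow_succ, mul_assoc]⟩
      | y g => exact ⟨(L ++ [(a, g)], 0), by simp [ι_LetR_y, wordP, mul_assoc]⟩
    | zero => simp
    | add u v _ _ hu hv => rw [add_mul]; exact add_mem hu hv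
    | smul r u _ hu => rw [smul_mul_assoc]; exact Submodule.smul_mem _ r hu
  | add v w hv hw => exact add_mem hv hw
  | smul r w hw => exact Submodule.smul_mem _ r hw

noncomputable def diamondOneHom (s : G) : A1 →ₐ[ℚ] Ar G :=
  lift ℚ fun l => match l with
    | LetA.x => zdel s
    | LetA.y => zet - zdel s

@[simp] lemma diamondOneHom_X1 (s : G) : diamondOneHom s X1 = zdel s := by
  simp [diamondOneHom, X1]

@[simp] lemma diamondOneHom_Y1 (s : G) : diamondOneHom s Y1 = zet - zdel s := by
  simp [diamondOneHom, Y1]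

namespace DiamondSetup

section Recursions

variable (S : DiamondSetup G) (s : G)

lemma psi_one : S.psi s 1 = 1 := by
  simpa [wordP, cumul] using S.psi_spec s [] 0

lemma psi_Xr_mul (u : Ar G) : S.psi s (Xr * u) = zet * S.psi s u := by
  refine LinearMap.congr_fun (LinearMap.ext_on_range span_wordP_mul_pow_eq_top
    (f := (S.psi s).toLinearMap ∘ₗ LinearMap.mulLeft ℚ Xr)
    (g := LinearMap.mulLeft ℚ zet ∘ₗ (S.psi s).toLinearMap) fun ⟨L, a⟩ => ?_) u
  simp only [LinearMap.comp_apply, LinearMap.mulLeft_apply, LinearEquiv.coe_coe]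
  cases L with
  | nil =>
    rw [show Xr * (wordP [] * Xr ^ a) = wordP ([] : List (ℕ × G)) * Xr ^ (a + 1) by
      simp [wordP, pow_succ'], S.psi_spec, S.psi_spec]
    simp [cumul, wordP, pow_succ']
  | cons p L =>
    rw [show Xr * (wordP (p :: L) * Xr ^ a) = wordP ((p.1 + 1, p.2) :: L) * Xr ^ a by
      simp only [wordP_cons, pow_succ', mul_assoc], S.psi_spec, S.psi_spec]
    simp only [cumul, wordP_cons, pow_succ', mul_assoc, map_mul, phi_Xr]

lemma psi_Yr_one_mul (u : Ar G) : S.psi s (Yr 1 * u) = phi (Yr s) * S.psi s u := by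
  refine LinearMap.congr_fun (LinearMap.ext_on_range span_wordP_mul_pow_eq_top
    (f := (S.psi s).toLinearMap ∘ₗ LinearMap.mulLeft ℚ (Yr 1))
    (g := LinearMap.mulLeft ℚ (phi (Yr s)) ∘ₗ (S.psi s).toLinearMap) fun ⟨L, a⟩ => ?_) u
  simp only [LinearMap.comp_apply, LinearMap.mulLeft_apply, LinearEquiv.coe_coe]
  rw [show Yr 1 * (wordP L * Xr ^ a) = wordP ((0, 1) :: L) * Xr ^ a by
    simp only [wordP_cons, pow_zero, one_mul, mul_assoc], S.psi_spec, S.psi_spec]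
  simp only [cumul, mul_one, wordP_cons, pow_zero, one_mul, mul_assoc, map_mul]

lemma psi_phi_jm_mul (v : A1) (w : Ar G) :
    S.psi s (phi (jm v) * w) = diamondOneHom s v * S.psi s w := by
  induction v using FreeAlgebra.induction generalizing w with
  | grade0 r => simp [Algebra.algebraMap_eq_smul_one]
  | grade1 l =>
    cases l with
    | x =>
      rw [ι_LetA_x, jm_X1, phi_Xr, zet, add_mul, map_add, psi_Xr_mul, psi_Yr_one_mul,
        diamondOneHom_X1, phi_Yr, zet]
      noncomm_ring
    | y =>
      rw [ι_LetA_y, jm_Y1, phi_Yr, zdel_one, zet, sub_add_cancel_left, neg_mul, map_neg,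
        psi_Yr_one_mul, diamondOneHom_Y1, phi_Yr, zet]
      noncomm_ring
  | mul a b ha hb => simp only [map_mul, mul_assoc, ha, hb]
  | add a b ha hb => rw [map_add, map_add, add_mul, map_add, ha, hb, map_add, add_mul]

lemma D_apply_one (v : A1) : S.D s v 1 = diamondOneHom s v := by
  rw [S.D_one, ← mul_one (phi (jm v)), psi_phi_jm_mul, psi_one, mul_one]

lemma D_mul_X1_add_D_mul_Y1 (v : A1) (w : Ar G) :
    S.D s (v * X1) w + S.D s (v * Y1) w = S.D s v w * zet := by
  induction w using FreeAlgebra.induction_mul_ι with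
  | one =>
    simp only [D_apply_one, map_mul, diamondOneHom_X1, diamondOneHom_Y1]
    noncomm_ring
  | mul_ι w l _ =>
    cases l with
    | x => rw [ι_LetR_x, S.Dxx, S.Dyx, zet]; noncomm_ring
    | y u =>
      rw [ι_LetR_y]
      by_cases hu : u = 1
      · subst hu
        rw [S.Dxy, S.Dyy, zet]; noncomm_ring
      · rw [S.Dxyt s u hu, S.Dyyt s u hu, zet]; noncomm_ring
  | add w₁ w₂ h₁ h₂ => rw [map_add, map_add, map_add, add_mul, ← h₁, ← h₂]; abel
  | smul r w h => simp only [map_smul, ← h, smul_add, smul_mul_assoc]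

lemma D_X1 (w : Ar G) : S.D s X1 w = w * zet - S.D s Y1 w := by
  simpa [S.one_D, eq_sub_iff_add_eq] using S.D_mul_X1_add_D_mul_Y1 s 1 w

lemma D_mul_X1_zdel (t : G) (v : A1) :
    S.D s (v * X1) (zdel t) = (S.D s v (zdel t) - S.D s (v * Y1) 1) * zdel t := by
  by_cases ht : t = 1
  · subst ht
    simpa [zdel_one, sub_mul] using S.Dxx s v 1
  · have hx := S.Dxx s v 1
    have hy := S.Dxyt s t ht v 1
    simp only [one_mul] at hx hy
    rw [zdel_of_ne_one ht, map_add, hx, hy, map_add]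
    noncomm_ring

lemma D_mul_Y1_zdel (t : G) (v : A1) :
    S.D s (v * Y1) (zdel t) =
      S.D s v (zdel t) * (zet - zdel t) + S.D s (v * Y1) 1 * zdel t := by
  by_cases ht : t = 1
  · subst ht
    simpa [zdel_one, zet] using S.Dyx s v 1
  · have hx := S.Dyx s v 1
    have hy := S.Dyyt s t ht v 1
    simp only [one_mul] at hx hy
    rw [zdel_of_ne_one ht, map_add, hx, hy, map_add, zet]
    noncomm_ring

end Recursions

def YMulRule (S : DiamondSetup G) (s t : G) (z : Ar G) (v : A1) (w : Ar G) : Prop :=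
  S.D s (Y1 * v) (z * w) = S.D s Y1 1 * S.D s v (z * w) + z * S.D t (Y1 * v) w

namespace YMulRule

variable {S : DiamondSetup G} {s t : G} {z : Ar G}

lemma add_left {v₁ v₂ : A1} {w : Ar G} (h₁ : S.YMulRule s t z v₁ w)
    (h₂ : S.YMulRule s t z v₂ w) : S.YMulRule s t z (v₁ + v₂) w := by
  simp only [YMulRule, mul_add, map_add, LinearMap.add_apply] at h₁ h₂ ⊢
  rw [h₁, h₂]; abel

lemma smul_left {v : A1} {w : Ar G} (r : ℚ) (h : S.YMulRule s t z v w) :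
    S.YMulRule s t z (r • v) w := by
  simp only [YMulRule, mul_smul_comm, map_smul, LinearMap.smul_apply] at h ⊢
  rw [h, smul_add]

lemma add_right {v : A1} {w₁ w₂ : Ar G} (h₁ : S.YMulRule s t z v w₁)
    (h₂ : S.YMulRule s t z v w₂) : S.YMulRule s t z v (w₁ + w₂) := by
  simp only [YMulRule, mul_add, map_add] at h₁ h₂ ⊢
  rw [h₁, h₂]; abel

lemma smul_right {v : A1} {w : Ar G} (r : ℚ) (h : S.YMulRule s t z v w) :
    S.YMulRule s t z v (r • w) := by
  simp only [YMulRule, mul_smul_comm, map_smul] at h ⊢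
  rw [h, smul_add]

lemma mul_ι_mul_ι {v : A1} {w : Ar G} (hv : ∀ l, S.YMulRule s t z v (w * ι ℚ l))
    (hw : ∀ a, S.YMulRule s t z (v * ι ℚ a) w) (a : LetA) (b : LetR G) :
    S.YMulRule s t z (v * ι ℚ a) (w * ι ℚ b) := by
  have hwx := hw LetA.x
  have hwy := hw LetA.y
  have hvx := hv LetR.x
  simp only [YMulRule, ι_LetA_x, ι_LetA_y, ι_LetR_x, ← mul_assoc] at hwx hwy hvx ⊢
  cases a with
  | x =>
    cases b with
    | x => rw [ι_LetA_x, ι_LetR_x, S.Dxx, S.Dxx, S.Dxx, hvx, hwy]; noncomm_ring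
    | y u =>
      have hvy := hv (LetR.y u)
      simp only [YMulRule, ι_LetR_y, ← mul_assoc] at hvy
      rw [ι_LetA_x, ι_LetR_y]
      by_cases hu : u = 1
      · subst hu
        rw [S.Dxy, S.Dxy, S.Dxy, hvy, hwx]; noncomm_ring
      · rw [S.Dxyt s u hu, S.Dxyt s u hu, S.Dxyt t u hu]
        simp only [mul_add, map_add]
        rw [hvx, hvy, hwy]; noncomm_ring
  | y =>
    cases b with
    | x => rw [ι_LetA_y, ι_LetR_x, S.Dyx, S.Dyx, S.Dyx, hvx, hwy]; noncomm_ring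
    | y u =>
      have hvy := hv (LetR.y u)
      simp only [YMulRule, ι_LetR_y, ← mul_assoc] at hvy
      rw [ι_LetA_y, ι_LetR_y]
      by_cases hu : u = 1
      · subst hu
        rw [S.Dyy, S.Dyy, S.Dyy, hvy, hwx]; noncomm_ring
      · rw [S.Dyyt s u hu, S.Dyyt s u hu, S.Dyyt t u hu]
        simp only [mul_add, map_add, ← mul_assoc]
        rw [hvx, hvy, hwy]; noncomm_ring

lemma one_mul_ι {w : Ar G} (h : S.YMulRule s t z 1 w) (b : LetR G) :
    S.YMulRule s t z 1 (w * ι ℚ b) := by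
  simp only [YMulRule, mul_one, S.one_D, ← mul_assoc] at h ⊢
  cases b with
  | x =>
    have hs := S.Dyx s 1 (z * w)
    have ht := S.Dyx t 1 w
    simp only [one_mul, S.one_D] at hs ht
    rw [ι_LetR_x, hs, ht, h]; noncomm_ring
  | y u =>
    rw [ι_LetR_y]
    by_cases hu : u = 1
    · subst hu
      have hs := S.Dyy s 1 (z * w)
      have ht := S.Dyy t 1 w
      simp only [one_mul, S.one_D] at hs ht
      rw [hs, ht, D_X1, D_X1, h]; noncomm_ring
    · have hs := S.Dyyt s u hu 1 (z * w)
      have ht := S.Dyyt t u hu 1 w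
      simp only [one_mul, S.one_D] at hs ht
      rw [hs, ht, h]; noncomm_ring

lemma of_one (h : ∀ v, S.YMulRule s t z v 1) (v : A1) (w : Ar G) : S.YMulRule s t z v w := by
  induction w using FreeAlgebra.induction_mul_ι generalizing v with
  | one => exact h v
  | mul_ι w b hw =>
    induction v using FreeAlgebra.induction_mul_ι generalizing b with
    | one => exact (hw 1).one_mul_ι b
    | mul_ι v a hv => exact mul_ι_mul_ι hv (fun a => hw _) a b
    | add v₁ v₂ h₁ h₂ => exact (h₁ b).add_left (h₂ b)
    | smul r v hv => exact (hv b).smul_left r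
  | add w₁ w₂ h₁ h₂ => exact (h₁ v).add_right (h₂ v)
  | smul r w hw => exact (hw v).smul_right r

end YMulRule

lemma yMulRule_zdel_one (S : DiamondSetup G) (s t : G) (v : A1) :
    S.YMulRule s t (zdel t) v 1 := by
  induction v using FreeAlgebra.induction_mul_ι with
  | one =>
    have h := S.D_mul_Y1_zdel s t 1
    simp only [one_mul, S.one_D] at h
    simp only [YMulRule, mul_one, S.one_D, h, D_apply_one, diamondOneHom_Y1]
    noncomm_ring
  | mul_ι v a ih =>
    simp only [YMulRule, mul_one] at ih ⊢
    cases a with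
    | x =>
      rw [ι_LetA_x, ← mul_assoc, D_mul_X1_zdel, D_mul_X1_zdel, ih]
      simp only [D_apply_one, map_mul, diamondOneHom_X1]
      noncomm_ring
    | y =>
      rw [ι_LetA_y, ← mul_assoc, D_mul_Y1_zdel, D_mul_Y1_zdel, ih]
      simp only [D_apply_one, map_mul, diamondOneHom_Y1]
      noncomm_ring
  | add v₁ v₂ h₁ h₂ => exact h₁.add_left h₂
  | smul r v h => exact h.smul_left r

end DiamondSetup

/-- For all `s, t ∈ μ_r`, `v ∈ A_1`, `w ∈ A_r`:
`(yv) ⋄_s (z_t^δ w) = (y ⋄_s 1)(v ⋄_s z_t^δ w) + z_t^δ(yv ⋄_t w)`. -/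
theorem statement12 {G : Type} [CommGroup G] (S : DiamondSetup G)
    (s t : G) (v : A1) (w : Ar G) :
    S.D s (Y1 * v) (zdel t * w) =
      S.D s Y1 1 * S.D s v (zdel t * w) + zdel t * S.D t (Y1 * v) w :=
  DiamondSetup.YMulRule.of_one (S.yMulRule_zdel_one s t) v w
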